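/- arXiv:2201.05534 — 2 statements merged into one kernel-verified Lean document; each statement's English description precedes it below -/
import Mathlib

section
/- For positive semidefinite matrices P and Q on a finite-dimensional complex inner product space and α ∈ [0,1], tr((P+Q)^α) ≤ tr(P^α) + tr(Q^α). -/
open Matrix MeasureTheory
open scoped Kronecker ComplexOrder

noncomputable def mpow {n : Type*} [Fintype n] [DecidableEq n]
    (A : Matrix n n ℂ) (p : ℝ) : Matrix n n ℂ :=
  if hA : A.IsHermitian then
    (hA.eigenvectorUnitary : Matrix n n ℂ) *
      Matrix.diagonal (fun i => ((hA.eigenvalues i ^ p : ℝ) : ℂ)) *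
      (star (hA.eigenvectorUnitary : Matrix n n ℂ))
  else 0

noncomputable def traceNorm {n : Type*} [Fintype n] [DecidableEq n]
    (A : Matrix n n ℂ) : ℝ :=
  (mpow (Aᴴ * A) (1/2)).trace.re

def IsDensity {n : Type*} [Fintype n] [DecidableEq n] (ρ : Matrix n n ℂ) : Prop :=
  ρ.PosSemidef ∧ ρ.trace = 1

noncomputable def sandTr {a b : Type*} [Fintype a] [DecidableEq a] [Fintype b] [DecidableEq b]
    (α : ℝ) (ρ : Matrix (a × b) (a × b) ℂ) (η : Matrix b b ℂ) : ℝ :=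
  (mpow (((1 : Matrix a a ℂ) ⊗ₖ mpow η ((1 - α)/(2*α))) * ρ *
      ((1 : Matrix a a ℂ) ⊗ₖ mpow η ((1 - α)/(2*α)))) α).trace.re

noncomputable def Hcond {a b : Type*} [Fintype a] [DecidableEq a] [Fintype b] [DecidableEq b]
    (α : ℝ) (ρ : Matrix (a × b) (a × b) ℂ) : ℝ :=
  ⨆ η : {η : Matrix b b ℂ // IsDensity η}, (1/(1-α)) * Real.logb 2 (sandTr α ρ η)

/-! Write `P = RᴴR` and `Q = SᴴS` with `RRᴴ`, `SSᴴ` the diagonal matrices of eigenvalues of `P`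
and `Q` (take `R = diag(√λ) Uᴴ`), and stack `M = [R; S]`. Then `MᴴM = P + Q`, while `MMᴴ` has
the same nonzero eigenvalues and its diagonal lists the eigenvalues of `P` and then of `Q`.
Since `t ↦ t ^ α` vanishes at `0`, the left side is `∑ λ(MMᴴ) ^ α`; since it is concave, this
is at most `∑ d ^ α` over the diagonal entries `d` of `MMᴴ` (Schur), because the diagonal of a
Hermitian matrix is the image of its spectrum under the doubly stochastic matrix `(|U i j|²)`. -/

open Polynomial

theorem ConcaveOn.sum_le_sum_mulVec_of_mem_doublyStochastic {n : Type*} [Fintype n]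
    [DecidableEq n] {s : Set ℝ} {f : ℝ → ℝ} (hf : ConcaveOn ℝ s f) {D : Matrix n n ℝ}
    (hD : D ∈ doublyStochastic ℝ n) {x : n → ℝ} (hx : ∀ i, x i ∈ s) :
    ∑ i, f (x i) ≤ ∑ i, f ((D *ᵥ x) i) :=
  calc ∑ j, f (x j) = ∑ i, ∑ j, D i j • f (x j) := by
        simp only [Finset.sum_comm (γ := n), ← Finset.sum_smul,
          sum_col_of_mem_doublyStochastic hD, one_smul]
    _ ≤ ∑ i, f ((D *ᵥ x) i) := Finset.sum_le_sum fun i _ =>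
        hf.le_map_sum (fun j _ => nonneg_of_mem_doublyStochastic hD)
          (sum_row_of_mem_doublyStochastic hD i) (fun j _ => hx j)

namespace Matrix

variable {m n : Type*} [Fintype m] [DecidableEq m] [Fintype n] [DecidableEq n]

theorem normSq_apply_mem_doublyStochastic {U : Matrix n n ℂ} (hU : U ∈ unitaryGroup n ℂ) :
    (of fun i j => Complex.normSq (U i j)) ∈ doublyStochastic ℝ n := by
  have hrow (i : n) : ∑ j, Complex.normSq (U i j) = 1 := by
    have h : (U * star U) i i = 1 := by rw [Unitary.mul_star_self_of_mem hU, one_apply_eq]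
    simpa [mul_apply, Complex.normSq_apply, Complex.re_sum] using congrArg Complex.re h
  have hcol (j : n) : ∑ i, Complex.normSq (U i j) = 1 := by
    have h : (star U * U) j j = 1 := by rw [Unitary.star_mul_self_of_mem hU, one_apply_eq]
    simpa [mul_apply, Complex.normSq_apply, Complex.re_sum] using congrArg Complex.re h
  exact mem_doublyStochastic_iff_sum.mpr ⟨fun _ _ => Complex.normSq_nonneg _, hrow, hcol⟩

theorem IsHermitian.re_apply_self_eq_mulVec_eigenvalues {A : Matrix n n ℂ} (hA : A.IsHermitian)
    (i : n) :
    (A i i).re =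
      ((of fun i j => Complex.normSq (hA.eigenvectorUnitary i j)) *ᵥ hA.eigenvalues) i := by
  conv_lhs => rw [hA.spectral_theorem]
  rw [Unitary.conjStarAlgAut_apply, mul_apply, Complex.re_sum]
  refine Finset.sum_congr rfl fun j _ => ?_
  rw [mul_diagonal, star_apply, mul_right_comm, Complex.star_def, Complex.mul_conj]
  simp

theorem IsHermitian.sum_le_sum_re_diag_of_concaveOn {A : Matrix n n ℂ} (hA : A.IsHermitian)
    {s : Set ℝ} {f : ℝ → ℝ} (hf : ConcaveOn ℝ s f) (hs : ∀ i, hA.eigenvalues i ∈ s) :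
    ∑ i, f (hA.eigenvalues i) ≤ ∑ i, f (A i i).re := by
  simp only [hA.re_apply_self_eq_mulVec_eigenvalues]
  exact hf.sum_le_sum_mulVec_of_mem_doublyStochastic
    (normSq_apply_mem_doublyStochastic hA.eigenvectorUnitary.2) hs

theorem IsHermitian.sum_map_roots_X_pow_mul_charpoly {A : Matrix n n ℂ} (hA : A.IsHermitian)
    (k : ℕ) {f : ℝ → ℝ} (hf : f 0 = 0) :
    ((X ^ k * A.charpoly).roots.map fun z : ℂ => f z.re).sum = ∑ i, f (hA.eigenvalues i) := by
  rw [roots_mul ((monic_X_pow k).mul (charpoly_monic A)).ne_zero, roots_X_pow,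
    hA.roots_charpoly_eq_eigenvalues]
  simp [Finset.sum_map_val, Multiset.map_nsmul, Multiset.sum_nsmul, hf]

theorem IsHermitian.sum_eigenvalues_eq_of_X_pow_mul_charpoly_eq {A : Matrix m m ℂ}
    {B : Matrix n n ℂ} (hA : A.IsHermitian) (hB : B.IsHermitian) {k l : ℕ}
    (h : X ^ k * A.charpoly = X ^ l * B.charpoly) {f : ℝ → ℝ} (hf : f 0 = 0) :
    ∑ i, f (hA.eigenvalues i) = ∑ j, f (hB.eigenvalues j) := by
  rw [← hA.sum_map_roots_X_pow_mul_charpoly k hf, h, hB.sum_map_roots_X_pow_mul_charpoly l hf]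

theorem PosSemidef.exists_conjTranspose_mul_self_eq_and_mul_conjTranspose_eq_diagonal
    {A : Matrix n n ℂ} (hA : A.PosSemidef) :
    ∃ R : Matrix n n ℂ, Rᴴ * R = A ∧
      R * Rᴴ = diagonal fun i => (hA.1.eigenvalues i : ℂ) := by
  set U : Matrix n n ℂ := (hA.1.eigenvectorUnitary : Matrix n n ℂ)
  set D : Matrix n n ℂ := diagonal fun i => (√(hA.1.eigenvalues i) : ℂ)
  have hDH : Dᴴ = D := by simp [D, diagonal_conjTranspose]
  have hDD : D * D = diagonal fun i => (hA.1.eigenvalues i : ℂ) := by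
    simp only [D, diagonal_mul_diagonal, ← Complex.ofReal_mul,
      Real.mul_self_sqrt (hA.eigenvalues_nonneg _)]
  refine ⟨D * star U, ?_, ?_⟩
  · calc (D * star U)ᴴ * (D * star U) = U * (D * D) * star U := by
          simp only [conjTranspose_mul, star_eq_conjTranspose, conjTranspose_conjTranspose, hDH,
            mul_assoc]
      _ = A := by
          conv_rhs => rw [hA.1.spectral_theorem, Unitary.conjStarAlgAut_apply]
          rw [hDD]; rfl
  · calc D * star U * (D * star U)ᴴ = D * (star U * U) * D := by
          simp only [conjTranspose_mul, star_eq_conjTranspose, conjTranspose_conjTranspose, hDH,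
            mul_assoc]
      _ = _ := by rw [Unitary.coe_star_mul_self, mul_one, hDD]

end Matrix

theorem re_trace_mpow {n : Type*} [Fintype n] [DecidableEq n] {A : Matrix n n ℂ}
    (hA : A.IsHermitian) (p : ℝ) :
    (mpow A p).trace.re = ∑ i, hA.eigenvalues i ^ p := by
  rw [mpow, dif_pos hA, trace_mul_cycle, Unitary.coe_star_mul_self, one_mul, trace_diagonal,
    Complex.re_sum]
  simp

/-- McCarthy's inequality: trace subadditivity of the α-power for α ∈ [0,1]. -/
theorem mccarthy_trace_subadditive {n : Type*} [Fintype n] [DecidableEq n]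
    (P Q : Matrix n n ℂ) (hP : P.PosSemidef) (hQ : Q.PosSemidef)
    (α : ℝ) (hα : α ∈ Set.Icc (0:ℝ) 1) :
    (mpow (P + Q) α).trace.re ≤ (mpow P α).trace.re + (mpow Q α).trace.re := by
  obtain ⟨hα₀, hα₁⟩ := hα
  rw [re_trace_mpow (hP.add hQ).1, re_trace_mpow hP.1, re_trace_mpow hQ.1]
  rcases hα₀.eq_or_lt with rfl | hα₀
  · simp
  obtain ⟨R, hRR, hR⟩ := hP.exists_conjTranspose_mul_self_eq_and_mul_conjTranspose_eq_diagonal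
  obtain ⟨S, hSS, hS⟩ := hQ.exists_conjTranspose_mul_self_eq_and_mul_conjTranspose_eq_diagonal
  set M := fromRows R S
  have hMM : Mᴴ * M = P + Q := by
    simp [M, conjTranspose_fromRows_eq_fromCols_conjTranspose, fromCols_mul_fromRows, hRR, hSS]
  have hT : (M * Mᴴ).PosSemidef := posSemidef_self_mul_conjTranspose M
  have hcharpoly := charpoly_mul_comm' M Mᴴ
  rw [hMM] at hcharpoly
  calc ∑ i, (hP.add hQ).1.eigenvalues i ^ α = ∑ i, hT.1.eigenvalues i ^ α :=
        (hT.1.sum_eigenvalues_eq_of_X_pow_mul_charpoly_eq (hP.add hQ).1 hcharpoly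
          (f := (· ^ α)) (Real.zero_rpow hα₀.ne')).symm
    _ ≤ ∑ i, ((M * Mᴴ) i i).re ^ α :=
        hT.1.sum_le_sum_re_diag_of_concaveOn (Real.concaveOn_rpow hα₀.le hα₁)
          hT.eigenvalues_nonneg
    _ = ∑ i, hP.1.eigenvalues i ^ α + ∑ i, hQ.1.eigenvalues i ^ α := by
        simp [M, conjTranspose_fromRows_eq_fromCols_conjTranspose, hR, hS,
          Fintype.sum_sum_type]
end

section
/- In the limit α → 1⁻, the continuity bound log(1+ε) + (1/(1-α)) log(1 + ε^α d_A^{2(1-α)} - ε/(1+ε)^{1-α}) converges to 2ε log(d_A) + (1+ε)log(1+ε) - ε log(ε). -/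
/-!
Writing `g α = 1 + ε ^ α * d ^ (2 * (1 - α)) - ε / (1 + ε) ^ (1 - α)`, we have `g 1 = 1`, so
`log (g α) / (1 - α)` is minus a difference quotient of `log ∘ g` at `1` and tends to
`-g'(1) = -ε (log ε - 2 log d - log (1 + ε))`. Dividing by `log 2` and adding `logb 2 (1 + ε)`
gives Winter's bound.
-/

open Filter Topology Real

theorem tendsto_log_div_sub_of_hasDerivAt {g : ℝ → ℝ} {g' a : ℝ} (hg : HasDerivAt g g' a)
    (ha : g a = 1) : Tendsto (fun x => log (g x) / (a - x)) (𝓝[≠] a) (𝓝 (-g')) := by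
  have hlog : HasDerivAt (fun x => log (g x)) g' a := by
    simpa [ha] using hg.log (by simp [ha])
  refine (hasDerivAt_iff_tendsto_slope.mp hlog).neg.congr fun x => ?_
  rw [slope_def_field, ha, log_one, sub_zero, ← neg_sub, div_neg, neg_neg]

theorem hasDerivAt_one_add_rpow_mul_rpow_sub_div_rpow {ε d : ℝ} (hε : 0 < ε) (hd : 0 < d) :
    HasDerivAt (fun α : ℝ => 1 + ε ^ α * d ^ (2 * (1 - α)) - ε / (1 + ε) ^ (1 - α))
      (ε * (log ε - 2 * log d - log (1 + ε))) 1 := by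
  have hε' : 0 < 1 + ε := by linarith
  have hpow := ((hasDerivAt_id (1 : ℝ)).const_rpow hε).mul
    ((((hasDerivAt_id (1 : ℝ)).const_sub 1).const_mul 2).const_rpow hd)
  have hdiv := (hasDerivAt_const (1 : ℝ) ε).div
    (((hasDerivAt_id (1 : ℝ)).const_sub 1).const_rpow hε') (by positivity)
  refine ((hpow.const_add 1).sub hdiv).congr_deriv ?_
  simp only [mul_one, id_eq, rpow_one, sub_self, mul_zero, rpow_zero, mul_neg, sub_neg_eq_add,
    zero_add, one_pow, div_one]
  ring

/-- As `α → 1⁻`, the Marwah–Dupuis continuity bound converges to Winter's tight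
AFW bound `2ε log d + (1+ε)log(1+ε) - ε log ε`. -/
theorem continuity_bound_limit (ε d : ℝ) (hε : ε ∈ Set.Ioc (0:ℝ) 1) (hd : 1 ≤ d) :
    Filter.Tendsto
      (fun α : ℝ => Real.logb 2 (1 + ε) +
        (1/(1-α)) * Real.logb 2 (1 + ε ^ α * d ^ (2*(1-α)) - ε / (1+ε) ^ (1-α)))
      (nhdsWithin 1 (Set.Iio 1))
      (nhds (2*ε*Real.logb 2 d + (1+ε)*Real.logb 2 (1+ε) - ε * Real.logb 2 ε)) := by
  have hderiv := hasDerivAt_one_add_rpow_mul_rpow_sub_div_rpow hε.1 (zero_lt_one.trans_le hd)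
  have hlim := (tendsto_log_div_sub_of_hasDerivAt hderiv (by simp)).mono_left
    (nhdsWithin_mono _ fun _ hα => (Set.mem_Iio.mp hα).ne)
  have hvalue : 2 * ε * logb 2 d + (1 + ε) * logb 2 (1 + ε) - ε * logb 2 ε =
      logb 2 (1 + ε) + -(ε * (log ε - 2 * log d - log (1 + ε))) / log 2 := by
    simp only [logb]
    ring
  rw [hvalue]
  refine (tendsto_const_nhds.add (hlim.div_const (log 2))).congr fun α => ?_
  simp only [logb]
  ring
end
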